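/- Let G be a group of nilpotency class at most 6 (γ₇(G) = 1) and let a, b ∈ G. Then for every natural number n, [b, a^n] = [a,a,a,a,b,a]^{C(n,5)} · [[b,a],a,a,b,a]^{2C(n,3)+3C(n,4)} · [a,a,a,b,a]^{C(n,4)} · [[b,a],a,b,a]^{C(n,2)+2C(n,3)} · [a,a,b,a]^{C(n,3)} · [a,b,a]^{C(n,2)} · [b,a]^n, where all commutators are right-normed and C(n,k) denotes the binomial coefficient (n choose k). -/

import Mathlib

open scoped commutatorElement

private lemma three_subgroups_le {G : Type*} [Group G] {H₁ H₂ H₃ N : Subgroup G} [N.Normal]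
    (h1 : ⁅⁅H₂, H₃⁆, H₁⁆ ≤ N) (h2 : ⁅⁅H₃, H₁⁆, H₂⁆ ≤ N) : ⁅⁅H₁, H₂⁆, H₃⁆ ≤ N := by
  let π := QuotientGroup.mk' N
  have hbot : ∀ {K : Subgroup G}, K ≤ N → Subgroup.map π K = ⊥ := by
    intro K hK
    rw [Subgroup.map_eq_bot_iff, QuotientGroup.ker_mk']
    exact hK
  have key : Subgroup.map π ⁅⁅H₁, H₂⁆, H₃⁆ = ⊥ := by
    rw [Subgroup.map_commutator, Subgroup.map_commutator]
    apply Subgroup.commutator_commutator_eq_bot_of_rotate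
    · rw [← Subgroup.map_commutator, ← Subgroup.map_commutator]
      exact hbot h1
    · rw [← Subgroup.map_commutator, ← Subgroup.map_commutator]
      exact hbot h2
  rw [Subgroup.map_eq_bot_iff, QuotientGroup.ker_mk'] at key
  exact key

private lemma lcs_comm_le {G : Type*} [Group G] :
    ∀ (j i : ℕ), ⁅(⊤ : Subgroup G).lowerCentralSeries i, (⊤ : Subgroup G).lowerCentralSeries j⁆ ≤ (⊤ : Subgroup G).lowerCentralSeries (i + j + 1)
  | 0, i => le_of_eq rfl
  | (j+1), i => by
    have key : ⁅⁅(⊤ : Subgroup G).lowerCentralSeries j, (⊤ : Subgroup G)⁆, (⊤ : Subgroup G).lowerCentralSeries i⁆ ≤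
        (⊤ : Subgroup G).lowerCentralSeries (i + (j + 1) + 1) := by
      apply three_subgroups_le
      · rw [Subgroup.commutator_comm (⊤ : Subgroup G) ((⊤ : Subgroup G).lowerCentralSeries i)]
        have h := lcs_comm_le (G := G) j (i + 1)
        have e : i + 1 + j + 1 = i + (j + 1) + 1 := by omega
        rw [e] at h
        exact h
      · calc ⁅⁅(⊤ : Subgroup G).lowerCentralSeries i, (⊤ : Subgroup G).lowerCentralSeries j⁆, (⊤ : Subgroup G)⁆
            ≤ ⁅(⊤ : Subgroup G).lowerCentralSeries (i + j + 1), (⊤ : Subgroup G)⁆ :=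
              Subgroup.commutator_mono (lcs_comm_le j i) le_rfl
          _ = (⊤ : Subgroup G).lowerCentralSeries (i + j + 1 + 1) := rfl
          _ ≤ (⊤ : Subgroup G).lowerCentralSeries (i + (j + 1) + 1) := le_of_eq (congrArg _ (by omega))
    calc ⁅(⊤ : Subgroup G).lowerCentralSeries i, (⊤ : Subgroup G).lowerCentralSeries (j + 1)⁆
        = ⁅(⊤ : Subgroup G).lowerCentralSeries (j + 1), (⊤ : Subgroup G).lowerCentralSeries i⁆ := Subgroup.commutator_comm _ _
      _ = ⁅⁅(⊤ : Subgroup G).lowerCentralSeries j, (⊤ : Subgroup G)⁆, (⊤ : Subgroup G).lowerCentralSeries i⁆ := rfl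
      _ ≤ _ := key

/-- Let `G` be a group of nilpotency class at most 6 (`γ₇(G) = (⊤ : Subgroup G).lowerCentralSeries 6 = ⊥`)
and `a, b ∈ G`.  Then for every natural number `n`,
`⁅b, aⁿ⁆ = [a,a,a,a,b,a]^C(n,5) ⬝ [[b,a],a,a,b,a]^(2C(n,3)+3C(n,4)) ⬝ [a,a,a,b,a]^C(n,4)`
`⬝ [[b,a],a,b,a]^(C(n,2)+2C(n,3)) ⬝ [a,a,b,a]^C(n,3) ⬝ [a,b,a]^C(n,2) ⬝ [b,a]^n`,
where all commutators are right-normed. -/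
theorem commutator_pow_right_expansion_class_six
    {G : Type*} [Group G] (hG : (⊤ : Subgroup G).lowerCentralSeries 6 = ⊥) (a b : G) (n : ℕ) :
    ⁅b, a ^ n⁆ =
      ⁅a, ⁅a, ⁅a, ⁅a, ⁅b, a⁆⁆⁆⁆⁆ ^ (n.choose 5) *
        ⁅⁅b, a⁆, ⁅a, ⁅a, ⁅b, a⁆⁆⁆⁆ ^ (2 * n.choose 3 + 3 * n.choose 4) *
        ⁅a, ⁅a, ⁅a, ⁅b, a⁆⁆⁆⁆ ^ (n.choose 4) *
        ⁅⁅b, a⁆, ⁅a, ⁅b, a⁆⁆⁆ ^ (n.choose 2 + 2 * n.choose 3) *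
        ⁅a, ⁅a, ⁅b, a⁆⁆⁆ ^ (n.choose 3) *
        ⁅a, ⁅b, a⁆⁆ ^ (n.choose 2) *
        ⁅b, a⁆ ^ n := by
  set c1 := ⁅b, a⁆ with hc1
  set c2 := ⁅a, c1⁆ with hc2
  set c3 := ⁅a, c2⁆ with hc3
  set c4 := ⁅a, c3⁆ with hc4
  set c5 := ⁅a, c4⁆ with hc5
  set d4 := ⁅c1, c2⁆ with hd4
  set d5 := ⁅c1, c3⁆ with hd5
  -- membership facts in the lower central series
  have mem_step : ∀ (i : ℕ) (x y : G), x ∈ (⊤ : Subgroup G).lowerCentralSeries i →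
      ⁅x, y⁆ ∈ (⊤ : Subgroup G).lowerCentralSeries (i + 1) := by
    intro i x y hx
    exact Subgroup.subset_closure ⟨x, hx, y, Subgroup.mem_top y, (commutatorElement_def x y).symm⟩
  have mem_step' : ∀ (i : ℕ) (x y : G), x ∈ (⊤ : Subgroup G).lowerCentralSeries i →
      ⁅y, x⁆ ∈ (⊤ : Subgroup G).lowerCentralSeries (i + 1) := by
    intro i x y hx
    rw [← commutatorElement_inv]
    exact inv_mem (mem_step i x y hx)
  have hm1 : c1 ∈ (⊤ : Subgroup G).lowerCentralSeries 1 := mem_step 0 b a (Subgroup.mem_top b)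
  have hm2 : c2 ∈ (⊤ : Subgroup G).lowerCentralSeries 2 := mem_step' 1 c1 a hm1
  have hm3 : c3 ∈ (⊤ : Subgroup G).lowerCentralSeries 3 := mem_step' 2 c2 a hm2
  have hm4 : c4 ∈ (⊤ : Subgroup G).lowerCentralSeries 4 := mem_step' 3 c3 a hm3
  have hm5 : c5 ∈ (⊤ : Subgroup G).lowerCentralSeries 5 := mem_step' 4 c4 a hm4
  have hmd4 : d4 ∈ (⊤ : Subgroup G).lowerCentralSeries 4 :=
    lcs_comm_le 2 1 (Subgroup.commutator_mem_commutator hm1 hm2)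
  have hmd5 : d5 ∈ (⊤ : Subgroup G).lowerCentralSeries 5 :=
    lcs_comm_le 3 1 (Subgroup.commutator_mem_commutator hm1 hm3)
  have vanish : ∀ {x y : G} (i j : ℕ), x ∈ (⊤ : Subgroup G).lowerCentralSeries i →
      y ∈ (⊤ : Subgroup G).lowerCentralSeries j → 5 ≤ i + j → Commute x y := by
    intro x y i j hx hy hij
    rw [← commutatorElement_eq_one_iff_commute]
    have h1 : ⁅x, y⁆ ∈ (⊤ : Subgroup G).lowerCentralSeries (i + j + 1) :=
      lcs_comm_le j i (Subgroup.commutator_mem_commutator hx hy)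
    have h2 : (⊤ : Subgroup G).lowerCentralSeries (i + j + 1) ≤ (⊤ : Subgroup G).lowerCentralSeries 6 :=
      Subgroup.lowerCentralSeries_antitone ⊤ (by omega)
    have h3 := h2 h1
    rw [hG] at h3
    exact Subgroup.mem_bot.mp h3
  have ha0 : a ∈ (⊤ : Subgroup G).lowerCentralSeries 0 := Subgroup.mem_top a
  -- commuting pairs
  have hac5 : Commute a c5 := vanish 0 5 ha0 hm5 (by omega)
  have had5 : Commute a d5 := vanish 0 5 ha0 hmd5 (by omega)
  have h14 : Commute c1 c4 := vanish 1 4 hm1 hm4 (by omega)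
  have h15 : Commute c1 c5 := vanish 1 5 hm1 hm5 (by omega)
  have h1d4 : Commute c1 d4 := vanish 1 4 hm1 hmd4 (by omega)
  have h1d5 : Commute c1 d5 := vanish 1 5 hm1 hmd5 (by omega)
  have h23 : Commute c2 c3 := vanish 2 3 hm2 hm3 (by omega)
  have h24 : Commute c2 c4 := vanish 2 4 hm2 hm4 (by omega)
  have h25 : Commute c2 c5 := vanish 2 5 hm2 hm5 (by omega)
  have h2d4 : Commute c2 d4 := vanish 2 4 hm2 hmd4 (by omega)
  have h2d5 : Commute c2 d5 := vanish 2 5 hm2 hmd5 (by omega)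
  have h34 : Commute c3 c4 := vanish 3 4 hm3 hm4 (by omega)
  have h35 : Commute c3 c5 := vanish 3 5 hm3 hm5 (by omega)
  have h3d4 : Commute c3 d4 := vanish 3 4 hm3 hmd4 (by omega)
  have h3d5 : Commute c3 d5 := vanish 3 5 hm3 hmd5 (by omega)
  have h45 : Commute c4 c5 := vanish 4 5 hm4 hm5 (by omega)
  have h4d4 : Commute c4 d4 := vanish 4 4 hm4 hmd4 (by omega)
  have h4d5 : Commute c4 d5 := vanish 4 5 hm4 hmd5 (by omega)
  have h5d4 : Commute c5 d4 := vanish 5 4 hm5 hmd4 (by omega)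
  have h5d5 : Commute c5 d5 := vanish 5 5 hm5 hmd5 (by omega)
  have hd4d5 : Commute d4 d5 := vanish 4 5 hmd4 hmd5 (by omega)
  -- basic exchange relations
  have comm_eq : ∀ x y z : G, x * y = z * (y * x) → ⁅x, y⁆ = z := by
    intro x y z h
    rw [commutatorElement_def, h]
    group
  have h12 : c1 * c2 = d4 * (c2 * c1) := by rw [hd4, commutatorElement_def]; group
  have h13 : c1 * c3 = d5 * (c3 * c1) := by rw [hd5, commutatorElement_def]; group
  -- conjugation relations
  have r1 : a * c1 * a⁻¹ = c2 * c1 := by rw [hc2, commutatorElement_def]; group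
  have r2 : a * c2 * a⁻¹ = c3 * c2 := by rw [hc3, commutatorElement_def]; group
  have r3 : a * c3 * a⁻¹ = c4 * c3 := by rw [hc4, commutatorElement_def]; group
  have r4 : a * c4 * a⁻¹ = c5 * c4 := by rw [hc5, commutatorElement_def]; group
  have r5 : a * c5 * a⁻¹ = c5 := by rw [hac5.eq]; group
  have r7 : a * d5 * a⁻¹ = d5 := by rw [had5.eq]; group
  have r6 : a * d4 * a⁻¹ = d5 * d4 := by
    have t13 : ∀ z : G, c1 * (c3 * z) = d5 * (c3 * (c1 * z)) := by
      intro z; rw [← mul_assoc, h13, mul_assoc, mul_assoc]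
    have t12 : ∀ z : G, c1 * (c2 * z) = d4 * (c2 * (c1 * z)) := by
      intro z; rw [← mul_assoc, h12, mul_assoc, mul_assoc]
    have s23 : ∀ z : G, c2 * (c3 * z) = c3 * (c2 * z) := by
      intro z; rw [← mul_assoc, h23.eq, mul_assoc]
    have s2d4 : ∀ z : G, c2 * (d4 * z) = d4 * (c2 * z) := by
      intro z; rw [← mul_assoc, h2d4.eq, mul_assoc]
    have s2d5 : ∀ z : G, c2 * (d5 * z) = d5 * (c2 * z) := by
      intro z; rw [← mul_assoc, h2d5.eq, mul_assoc]
    have s3d4 : ∀ z : G, c3 * (d4 * z) = d4 * (c3 * z) := by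
      intro z; rw [← mul_assoc, h3d4.eq, mul_assoc]
    have s3d5 : ∀ z : G, c3 * (d5 * z) = d5 * (c3 * z) := by
      intro z; rw [← mul_assoc, h3d5.eq, mul_assoc]
    have sd4d5 : ∀ z : G, d4 * (d5 * z) = d5 * (d4 * z) := by
      intro z; rw [← mul_assoc, hd4d5.eq, mul_assoc]
    have key : ⁅c2 * c1, c3 * c2⁆ = d5 * d4 := by
      apply comm_eq
      simp only [mul_assoc, t12, t13, h12, h13, s23, h23.eq, s2d4, s2d5, s3d4, s3d5, sd4d5]
    conv_lhs => rw [hd4]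
    rw [conjugate_commutatorElement, r1, r2, key]
  -- power exchange lemmas
  have P1 : ∀ k : ℕ, c1 * c2 ^ k = d4 ^ k * (c2 ^ k * c1) := by
    intro k
    induction k with
    | zero => simp
    | succ k ih =>
      calc c1 * c2 ^ (k + 1) = (c1 * c2 ^ k) * c2 := by rw [pow_succ, mul_assoc]
        _ = (d4 ^ k * (c2 ^ k * c1)) * c2 := by rw [ih]
        _ = d4 ^ k * (c2 ^ k * (c1 * c2)) := by simp only [mul_assoc]
        _ = d4 ^ k * (c2 ^ k * (d4 * (c2 * c1))) := by rw [h12]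
        _ = d4 ^ k * (d4 * (c2 ^ k * (c2 * c1))) := by
              rw [← mul_assoc (c2 ^ k), (h2d4.pow_left k).eq, mul_assoc]
        _ = (d4 ^ k * d4) * ((c2 ^ k * c2) * c1) := by simp only [mul_assoc]
        _ = d4 ^ (k + 1) * (c2 ^ (k + 1) * c1) := by rw [← pow_succ, ← pow_succ]
  have P2 : ∀ k : ℕ, c1 * c3 ^ k = d5 ^ k * (c3 ^ k * c1) := by
    intro k
    induction k with
    | zero => simp
    | succ k ih =>
      calc c1 * c3 ^ (k + 1) = (c1 * c3 ^ k) * c3 := by rw [pow_succ, mul_assoc]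
        _ = (d5 ^ k * (c3 ^ k * c1)) * c3 := by rw [ih]
        _ = d5 ^ k * (c3 ^ k * (c1 * c3)) := by simp only [mul_assoc]
        _ = d5 ^ k * (c3 ^ k * (d5 * (c3 * c1))) := by rw [h13]
        _ = d5 ^ k * (d5 * (c3 ^ k * (c3 * c1))) := by
              rw [← mul_assoc (c3 ^ k), (h3d5.pow_left k).eq, mul_assoc]
        _ = (d5 ^ k * d5) * ((c3 ^ k * c3) * c1) := by simp only [mul_assoc]
        _ = d5 ^ (k + 1) * (c3 ^ (k + 1) * c1) := by rw [← pow_succ, ← pow_succ]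
  have P3 : ∀ k : ℕ, (c2 * c1) ^ k = d4 ^ (k.choose 2) * (c2 ^ k * c1 ^ k) := by
    intro k
    induction k with
    | zero => simp
    | succ k ih =>
      have e : (k + 1).choose 2 = k.choose 1 + k.choose 2 := Nat.choose_succ_succ k 1
      rw [Nat.choose_one_right] at e
      have h21d4 : Commute (c2 * c1) (d4 ^ (k.choose 2)) :=
        (Commute.mul_left h2d4 h1d4).pow_right _
      calc (c2 * c1) ^ (k + 1) = (c2 * c1) * (c2 * c1) ^ k := by rw [pow_succ']
        _ = (c2 * c1) * (d4 ^ (k.choose 2) * (c2 ^ k * c1 ^ k)) := by rw [ih]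
        _ = d4 ^ (k.choose 2) * ((c2 * c1) * (c2 ^ k * c1 ^ k)) := by
              rw [← mul_assoc, h21d4.eq, mul_assoc]
        _ = d4 ^ (k.choose 2) * (c2 * ((c1 * c2 ^ k) * c1 ^ k)) := by simp only [mul_assoc]
        _ = d4 ^ (k.choose 2) * (c2 * ((d4 ^ k * (c2 ^ k * c1)) * c1 ^ k)) := by rw [P1]
        _ = d4 ^ (k.choose 2) * (d4 ^ k * (c2 * (c2 ^ k * (c1 * c1 ^ k)))) := by
              simp only [mul_assoc]
              rw [← mul_assoc c2 (d4 ^ k), (h2d4.pow_right k).eq, mul_assoc]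
        _ = (d4 ^ (k.choose 2) * d4 ^ k) * ((c2 * c2 ^ k) * (c1 * c1 ^ k)) := by
              simp only [mul_assoc]
        _ = d4 ^ ((k + 1).choose 2) * (c2 ^ (k + 1) * c1 ^ (k + 1)) := by
              rw [← pow_add, ← pow_succ', ← pow_succ', e, Nat.add_comm]
  -- generic rearrangement rules
  have swapz : ∀ {x y : G}, Commute x y → ∀ (i j : ℕ) (z : G),
      x ^ i * (y ^ j * z) = y ^ j * (x ^ i * z) := by
    intro x y h i j z
    rw [← mul_assoc, (h.pow_pow i j).eq, mul_assoc]
  have mergez : ∀ (x : G) (i j : ℕ) (z : G), x ^ i * (x ^ j * z) = x ^ (i + j) * z := by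
    intro x i j z
    rw [← mul_assoc, ← pow_add]
  have merge2 : ∀ (x : G) (i j : ℕ), x ^ i * x ^ j = x ^ (i + j) := by
    intro x i j
    rw [← pow_add]
  have mc1 : ∀ {x : G}, Commute c1 x → ∀ (k : ℕ) (z : G),
      c1 * (x ^ k * z) = x ^ k * (c1 * z) := by
    intro x h k z
    rw [← mul_assoc, (h.pow_right k).eq, mul_assoc]
  have m5' : ∀ (k : ℕ) (z : G), c1 * (c3 ^ k * z) = d5 ^ k * (c3 ^ k * (c1 * z)) := by
    intro k z
    rw [← mul_assoc, P2 k, mul_assoc, mul_assoc]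
  have m6' : ∀ (k : ℕ) (z : G), c1 * (c2 ^ k * z) = d4 ^ k * (c2 ^ k * (c1 * z)) := by
    intro k z
    rw [← mul_assoc, P1 k, mul_assoc, mul_assoc]
  have m7 : ∀ j : ℕ, c1 * c1 ^ j = c1 ^ (j + 1) := fun j => (pow_succ' c1 j).symm
  -- the induction
  induction n with
  | zero =>
    simp [show Nat.choose 0 5 = 0 from rfl, show Nat.choose 0 4 = 0 from rfl,
      show Nat.choose 0 3 = 0 from rfl, show Nat.choose 0 2 = 0 from rfl]
  | succ n ih =>
    have e2 : (n + 1).choose 2 = n.choose 1 + n.choose 2 := Nat.choose_succ_succ n 1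
    rw [Nat.choose_one_right] at e2
    have e3 : (n + 1).choose 3 = n.choose 2 + n.choose 3 := Nat.choose_succ_succ n 2
    have e4 : (n + 1).choose 4 = n.choose 3 + n.choose 4 := Nat.choose_succ_succ n 3
    have e5 : (n + 1).choose 5 = n.choose 4 + n.choose 5 := Nat.choose_succ_succ n 4
    have expand : ⁅b, a ^ (n + 1)⁆ = c1 * (a * ⁅b, a ^ n⁆ * a⁻¹) := by
      rw [hc1, pow_succ']
      simp only [commutatorElement_def]
      group
    have conj_mul : ∀ x y : G, a * (x * y) * a⁻¹ = (a * x * a⁻¹) * (a * y * a⁻¹) := by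
      intro x y; group
    have conj_pow : ∀ (x : G) (k : ℕ), a * x ^ k * a⁻¹ = (a * x * a⁻¹) ^ k := by
      intro x k
      induction k with
      | zero => simp
      | succ k ihk => rw [pow_succ, pow_succ, ← ihk]; group
    rw [expand, ih]
    simp only [conj_mul, conj_pow, r1, r2, r3, r4, r5, r6, r7]
    rw [P3, (h45.symm).mul_pow, (hd4d5.symm).mul_pow, (h34.symm).mul_pow, (h23.symm).mul_pow]
    rw [e5, e4, e3, e2]
    simp only [mul_assoc]
    simp only [mc1 h15, mc1 h1d5, mc1 h14, mc1 h1d4, m5', m6', m7,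
      swapz h5d5.symm, swapz h45, swapz h4d5, swapz h5d4.symm, swapz hd4d5, swapz h4d4.symm,
      swapz h35, swapz h3d5, swapz h34, swapz h3d4,
      swapz h25, swapz h2d5, swapz h24, swapz h2d4, swapz h23,
      mergez, merge2]
    generalize n.choose 2 = q2
    generalize n.choose 3 = q3
    generalize n.choose 4 = q4
    generalize n.choose 5 = q5
    congr 1
    · congr 1
      omega
    congr 1
    · congr 1
      omega
    congr 1
    · congr 1
      omega
    congr 1
    · congr 1
      omega
    congr 1
    · congr 1
      omega
    congr 1
    · congr 1
      omega
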